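/- arXiv:2007.00325 — 10 statements merged into one kernel-verified Lean document; each statement's English description precedes it below -/
import Mathlib

section
/- Let p ≥ 1 and let t, s, A, B be real numbers with A·B ≤ 0. Then |tA + sB|^p ≥ (|t|^p·A + |s|^p·B)·|A+B|^{p-2}·(A+B), where the right-hand side is interpreted as 0 when A+B = 0. -/
/-!
Write `u = |t|`, `v = |s|`. After the symmetries `(A, B) ↦ (-A, -B)` and `(t, A) ↔ (s, B)` we may
assume `A ≥ 0 ≥ B` and `c = A + B > 0`; with `b = -B` the right-hand side becomes
`(u^p (b + c) - v^p b) c^{p-1}`, while `|tA + sB| ≥ |u (b + c) - v b|`. The claim then follows from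
two tangent-line inequalities for the convex function `x ↦ x^p`: one at `u c`, evaluated at
`u (b + c) - v b`, and one at `u`, evaluated at `v`.
-/

open Real

lemma rpow_tangent_le {p u x : ℝ} (hp : 1 ≤ p) (hu : 0 < u) (hx : 0 ≤ x) :
    u ^ p + p * u ^ (p - 1) * (x - u) ≤ x ^ p := by
  have hs : -1 ≤ (x - u) / u := by
    rw [le_div_iff₀ hu]; linarith
  have hbern := one_add_mul_self_le_rpow_one_add hs hp
  rw [show 1 + (x - u) / u = x / u by field_simp; ring, div_rpow hx hu.le] at hbern
  have hup : 0 < u ^ p := rpow_pos_of_pos hu p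
  calc u ^ p + p * u ^ (p - 1) * (x - u) = u ^ p * (1 + p * ((x - u) / u)) := by
        rw [rpow_sub_one hu.ne']; field_simp
    _ ≤ u ^ p * (x ^ p / u ^ p) := mul_le_mul_of_nonneg_left hbern hup.le
    _ = x ^ p := mul_div_cancel₀ _ hup.ne'

lemma rpow_sub_rpow_mul_le_abs_rpow {p u v b c : ℝ} (hp : 1 ≤ p) (hu : 0 ≤ u) (hv : 0 ≤ v)
    (hb : 0 ≤ b) (hc : 0 < c) :
    (u ^ p * (b + c) - v ^ p * b) * c ^ (p - 1) ≤ |u * (b + c) - v * b| ^ p := by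
  rcases hu.eq_or_lt with rfl | hu
  · rw [zero_rpow (by linarith)]
    have : 0 ≤ v ^ p * b * c ^ (p - 1) := by positivity
    linarith [rpow_nonneg (abs_nonneg (0 * (b + c) - v * b)) p]
  set x := u * (b + c) - v * b with hx
  have htan_uc := rpow_tangent_le hp (mul_pos hu hc) (abs_nonneg x)
  have htan_u := rpow_tangent_le hp hu hv
  rw [mul_rpow hu.le hc.le, mul_rpow hu.le hc.le, rpow_sub_one hc.ne' p] at htan_uc
  rw [rpow_sub_one hc.ne' p]
  calc (u ^ p * (b + c) - v ^ p * b) * (c ^ p / c)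
      = c ^ p / c * (u ^ p * c + b * (u ^ p - v ^ p)) := by ring
    _ ≤ c ^ p / c * (u ^ p * c + b * (p * u ^ (p - 1) * (u - v))) := by gcongr; linarith
    _ = u ^ p * c ^ p + p * (u ^ (p - 1) * (c ^ p / c)) * (b * (u - v)) := by
        field_simp
    _ ≤ u ^ p * c ^ p + p * (u ^ (p - 1) * (c ^ p / c)) * (|x| - u * c) := by
        gcongr; linarith [le_abs_self x]
    _ ≤ |x| ^ p := htan_uc

lemma mul_rpow_sub_one_le_abs_rpow_of_mul_nonpos {p t s A B : ℝ} (hp : 1 ≤ p)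
    (hAB : A * B ≤ 0) (hpos : 0 < A + B) :
    (|t| ^ p * A + |s| ^ p * B) * (A + B) ^ (p - 1) ≤ |t * A + s * B| ^ p := by
  wlog hB : B ≤ 0 generalizing t s A B
  · have h := this (t := s) (s := t) (A := B) (B := A) (by linarith [mul_comm A B])
      (by linarith) (by nlinarith)
    rwa [add_comm (|s| ^ p * B), add_comm B, add_comm (s * B)] at h
  have hA : 0 ≤ A := by linarith
  have h := rpow_sub_rpow_mul_le_abs_rpow hp (abs_nonneg t) (abs_nonneg s) (neg_nonneg.2 hB) hpos
  rw [show -B + (A + B) = A by ring] at h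
  have hle : |(|t| * A - |s| * -B)| ≤ |t * A + s * B| := by
    have := abs_abs_sub_abs_le_abs_sub (t * A) (-(s * B))
    rwa [abs_mul, abs_neg, abs_mul, abs_of_nonneg hA, abs_of_nonpos hB, sub_neg_eq_add] at this
  calc (|t| ^ p * A + |s| ^ p * B) * (A + B) ^ (p - 1)
      = (|t| ^ p * A - |s| ^ p * -B) * (A + B) ^ (p - 1) := by ring
    _ ≤ |(|t| * A - |s| * -B)| ^ p := h
    _ ≤ |t * A + s * B| ^ p := by gcongr

/-- Lemma (paper's Lemma on `|tA+sB|^p`): for `p ≥ 1` and reals `t, s, A, B` with `A·B ≤ 0`,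
`|tA + sB|^p ≥ (|t|^p A + |s|^p B)·|A+B|^{p-2}(A+B)`, where the right-hand factor
`|A+B|^{p-2}(A+B)` is interpreted as `sign(A+B)·|A+B|^{p-1}` (hence `0` when `A+B = 0`). -/
theorem stmt_0 (p t s A B : ℝ) (hp : 1 ≤ p) (hAB : A * B ≤ 0) :
    |t * A + s * B| ^ p ≥
      (|t| ^ p * A + |s| ^ p * B) * (Real.sign (A + B) * |A + B| ^ (p - 1)) := by
  rcases lt_trichotomy (A + B) 0 with h | h | h
  · have h' := mul_rpow_sub_one_le_abs_rpow_of_mul_nonpos (t := t) (s := s) hp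
      (show -A * -B ≤ 0 by linarith) (by linarith)
    rw [sign_of_neg h, abs_of_neg h]
    calc (|t| ^ p * A + |s| ^ p * B) * (-1 * (-(A + B)) ^ (p - 1))
        = (|t| ^ p * -A + |s| ^ p * -B) * (-A + -B) ^ (p - 1) := by ring_nf
      _ ≤ |t * -A + s * -B| ^ p := h'
      _ = |t * A + s * B| ^ p := by rw [← abs_neg]; ring_nf
  · rw [h, sign_zero, zero_mul, mul_zero]
    exact rpow_nonneg (abs_nonneg _) p
  · rw [sign_of_pos h, abs_of_pos h, one_mul]
    exact mul_rpow_sub_one_le_abs_rpow_of_mul_nonpos hp hAB h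
end

section
/- Let Γ = (V,H) be an oriented hypergraph with no vertex of degree zero. Then for every nonzero f : V → ℝ, the generalized Rayleigh quotient for p = 1 satisfies RQ_1(f) ≤ 1, i.e. Σ_{h∈H} |Σ_{i∈h_in} f(i) − Σ_{j∈h_out} f(j)| ≤ Σ_{i∈V} deg(i)·|f(i)|. Consequently, the maximum of RQ_1 over nonzero functions equals 1. -/
open Finset

variable {V H : Type*}

/-- Degree of a vertex in an oriented hypergraph `(hin, hout)`: the number of hyperedges
containing `i` only as an input or only as an output. -/
def hdeg [Fintype H] [DecidableEq V] (hin hout : H → Finset V) (i : V) : ℕ :=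
  (Finset.univ.filter
    (fun h => (i ∈ hin h ∧ i ∉ hout h) ∨ (i ∈ hout h ∧ i ∉ hin h))).card

/-- The generalized Rayleigh quotient of a vertex function `f : V → ℝ`. -/
noncomputable def RQ [Fintype V] [Fintype H] [DecidableEq V]
    (hin hout : H → Finset V) (p : ℝ) (f : V → ℝ) : ℝ :=
  (∑ h, |(∑ i ∈ hin h, f i) - ∑ j ∈ hout h, f j| ^ p) /
    ∑ i, (hdeg hin hout i : ℝ) * |f i| ^ p

lemma hdeg_eq_card [Fintype H] [DecidableEq V] (hin hout : H → Finset V)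
    (hdisj : ∀ h, Disjoint (hin h) (hout h)) (i : V) :
    hdeg hin hout i = (Finset.univ.filter (fun h => i ∈ hin h ∪ hout h)).card := by
  unfold hdeg
  congr 1
  apply Finset.filter_congr
  intro h _
  simp only [Finset.mem_union]
  constructor
  · rintro (⟨h1, _⟩ | ⟨h1, _⟩)
    · exact Or.inl h1
    · exact Or.inr h1
  · rintro (h1 | h1)
    · exact Or.inl ⟨h1, fun h2 => Finset.disjoint_left.mp (hdisj h) h1 h2⟩
    · exact Or.inr ⟨h1, fun h2 => Finset.disjoint_left.mp (hdisj h) h2 h1⟩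

lemma key_ineq [Fintype V] [Fintype H] [DecidableEq V]
    (hin hout : H → Finset V)
    (hdisj : ∀ h, Disjoint (hin h) (hout h)) (f : V → ℝ) :
    ∑ h, |(∑ i ∈ hin h, f i) - ∑ j ∈ hout h, f j| ≤
      ∑ i, (hdeg hin hout i : ℝ) * |f i| := by
  have h1 : ∀ h : H, |(∑ i ∈ hin h, f i) - ∑ j ∈ hout h, f j| ≤
      ∑ i ∈ hin h ∪ hout h, |f i| := by
    intro h
    rw [Finset.sum_union (hdisj h)]
    calc |(∑ i ∈ hin h, f i) - ∑ j ∈ hout h, f j|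
        ≤ |∑ i ∈ hin h, f i| + |∑ j ∈ hout h, f j| := abs_sub _ _
      _ ≤ _ := add_le_add (Finset.abs_sum_le_sum_abs _ _) (Finset.abs_sum_le_sum_abs _ _)
  calc ∑ h, |(∑ i ∈ hin h, f i) - ∑ j ∈ hout h, f j|
      ≤ ∑ h, ∑ i ∈ hin h ∪ hout h, |f i| := Finset.sum_le_sum fun h _ => h1 h
    _ = ∑ i, (hdeg hin hout i : ℝ) * |f i| := by
        have h2 : ∀ h : H, ∑ i ∈ hin h ∪ hout h, |f i| =
            ∑ i : V, if i ∈ hin h ∪ hout h then |f i| else 0 := by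
          intro h
          rw [Finset.sum_ite_mem, Finset.univ_inter]
        simp_rw [h2]
        rw [Finset.sum_comm]
        refine Finset.sum_congr rfl fun i _ => ?_
        rw [Finset.sum_ite, Finset.sum_const, Finset.sum_const_zero, add_zero,
          nsmul_eq_mul, hdeg_eq_card hin hout hdisj]

/-- For an oriented hypergraph with no vertex of degree zero: for every nonzero `f : V → ℝ`,
`Σ_h |Σ_{h_in} f − Σ_{h_out} f| ≤ Σ_i deg(i)|f(i)|` (i.e. `RQ_1(f) ≤ 1`), and consequently the
maximum of `RQ_1` over nonzero functions equals `1`. -/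
theorem stmt_4 [Fintype V] [Fintype H] [DecidableEq V] [Nonempty V]
    (hin hout : H → Finset V)
    (hdisj : ∀ h, Disjoint (hin h) (hout h))
    (hne : ∀ h, (hin h).Nonempty ∧ (hout h).Nonempty)
    (hdegpos : ∀ i, 0 < hdeg hin hout i) :
    (∀ f : V → ℝ, f ≠ 0 →
      ∑ h, |(∑ i ∈ hin h, f i) - ∑ j ∈ hout h, f j| ≤
        ∑ i, (hdeg hin hout i : ℝ) * |f i|) ∧
    IsGreatest {x | ∃ f : V → ℝ, f ≠ 0 ∧ RQ hin hout 1 f = x} 1 := by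
  refine ⟨fun f _ => key_ineq hin hout hdisj f, ?_, ?_⟩
  · -- membership: indicator of a vertex achieves 1
    obtain ⟨v⟩ := ‹Nonempty V›
    refine ⟨fun i => if i = v then 1 else 0, ?_, ?_⟩
    · intro h0
      have := congrFun h0 v
      simp at this
    · have hsum : ∀ s : Finset V, ∑ i ∈ s, (if i = v then (1:ℝ) else 0) =
          if v ∈ s then 1 else 0 := fun s => Finset.sum_ite_eq' s v (fun _ => (1:ℝ))
      have hnum : ∑ h, |(∑ i ∈ hin h, (if i = v then (1:ℝ) else 0)) -
          ∑ j ∈ hout h, (if j = v then (1:ℝ) else 0)| ^ (1:ℝ) =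
          (hdeg hin hout v : ℝ) := by
        simp_rw [Real.rpow_one, hsum]
        have : ∀ h : H, |(if v ∈ hin h then (1:ℝ) else 0) - (if v ∈ hout h then 1 else 0)|
            = if v ∈ hin h ∪ hout h then 1 else 0 := by
          intro h
          by_cases h1 : v ∈ hin h
          · have h2 : v ∉ hout h := fun h2 => Finset.disjoint_left.mp (hdisj h) h1 h2
            simp [h1, h2]
          · by_cases h2 : v ∈ hout h <;> simp [h1, h2]
        simp_rw [this]
        rw [Finset.sum_ite, Finset.sum_const, Finset.sum_const_zero, add_zero,
          nsmul_eq_mul, mul_one, hdeg_eq_card hin hout hdisj]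
      have hden : ∑ i, (hdeg hin hout i : ℝ) * |if i = v then (1:ℝ) else 0| ^ (1:ℝ) =
          (hdeg hin hout v : ℝ) := by
        simp_rw [Real.rpow_one, apply_ite abs, abs_one, abs_zero, mul_ite, mul_one, mul_zero]
        rw [Finset.sum_ite_eq' Finset.univ v (fun i => (hdeg hin hout i : ℝ))]
        simp
      rw [RQ, hnum, hden, div_self]
      exact Nat.cast_ne_zero.mpr (hdegpos v).ne'
  · -- upper bound
    rintro x ⟨f, hf, rfl⟩
    rw [RQ]
    simp_rw [Real.rpow_one]
    have hden : 0 < ∑ i, (hdeg hin hout i : ℝ) * |f i| := by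
      obtain ⟨i0, hi0⟩ := Function.ne_iff.mp hf
      refine Finset.sum_pos' (fun i _ => by positivity) ⟨i0, Finset.mem_univ _, ?_⟩
      exact mul_pos (by exact_mod_cast hdegpos i0) (abs_pos.mpr hi0)
    exact (div_le_one hden).mpr (key_ineq hin hout hdisj f)
end

section
/- Let Γ = (V,H) be an oriented hypergraph with no vertex of degree zero, and let p ≥ 1. For every hyperedge h ∈ H, the indicator function of h (as a function on H) has hyperedge Rayleigh quotient equal to Σ_{i∈h} 1/deg(i). Consequently min_γ RQ_p(γ) ≤ min_{h∈H} Σ_{i∈h} 1/deg(i) and max_γ RQ_p(γ) ≥ max_{h∈H} Σ_{i∈h} 1/deg(i). -/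
open Finset

variable {V H : Type*}

/-- The generalized Rayleigh quotient of a hyperedge function `γ : H → ℝ`. -/
noncomputable def RQH [Fintype V] [Fintype H] [DecidableEq V]
    (hin hout : H → Finset V) (p : ℝ) (γ : H → ℝ) : ℝ :=
  (∑ i, (1 / (hdeg hin hout i : ℝ)) *
      |(∑ h ∈ Finset.univ.filter (fun h => i ∈ hin h), γ h) -
        ∑ h ∈ Finset.univ.filter (fun h => i ∈ hout h), γ h| ^ p) /
    ∑ h, |γ h| ^ p

/-- For every hyperedge `h₀`, the indicator function of `h₀` has hyperedge Rayleigh quotient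
`Σ_{i∈h₀} 1/deg(i)`; consequently the minimum of `RQ_p` over nonzero hyperedge functions is at
most `min_h Σ_{i∈h} 1/deg(i)` and the maximum is at least `max_h Σ_{i∈h} 1/deg(i)`. -/
theorem stmt_5 [Fintype V] [Fintype H] [DecidableEq V] [DecidableEq H]
    (hin hout : H → Finset V)
    (hdisj : ∀ h, Disjoint (hin h) (hout h))
    (hne : ∀ h, (hin h).Nonempty ∧ (hout h).Nonempty)
    (hdegpos : ∀ i, 0 < hdeg hin hout i)
    (p : ℝ) (hp : 1 ≤ p) :
    (∀ h0 : H, RQH hin hout p (fun h => if h = h0 then 1 else 0) =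
        ∑ i ∈ hin h0 ∪ hout h0, 1 / (hdeg hin hout i : ℝ)) ∧
    (∀ h0 : H, ∃ γ : H → ℝ, γ ≠ 0 ∧
        RQH hin hout p γ ≤ ∑ i ∈ hin h0 ∪ hout h0, 1 / (hdeg hin hout i : ℝ)) ∧
    (∀ h0 : H, ∃ γ : H → ℝ, γ ≠ 0 ∧
        (∑ i ∈ hin h0 ∪ hout h0, 1 / (hdeg hin hout i : ℝ)) ≤ RQH hin hout p γ) := by
  have hp0 : p ≠ 0 := by positivity
  have key : ∀ h0 : H, RQH hin hout p (fun h => if h = h0 then 1 else 0) =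
      ∑ i ∈ hin h0 ∪ hout h0, 1 / (hdeg hin hout i : ℝ) := by
    intro h0
    unfold RQH
    have hden : (∑ h, |(fun h => if h = h0 then (1:ℝ) else 0) h| ^ p) = 1 := by
      have : ∀ h : H, |(fun h => if h = h0 then (1:ℝ) else 0) h| ^ p =
          if h = h0 then 1 else 0 := by
        intro h
        by_cases hh : h = h0 <;> simp [hh, Real.zero_rpow hp0]
      rw [Finset.sum_congr rfl fun h _ => this h]
      simp
    rw [hden, div_one]
    have hterm : ∀ i : V, (1 / (hdeg hin hout i : ℝ)) *
        |(∑ h ∈ Finset.univ.filter (fun h => i ∈ hin h),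
            (fun h => if h = h0 then (1:ℝ) else 0) h) -
          ∑ h ∈ Finset.univ.filter (fun h => i ∈ hout h),
            (fun h => if h = h0 then (1:ℝ) else 0) h| ^ p =
        if i ∈ hin h0 ∪ hout h0 then 1 / (hdeg hin hout i : ℝ) else 0 := by
      intro i
      have h1 : (∑ h ∈ Finset.univ.filter (fun h => i ∈ hin h),
          (fun h => if h = h0 then (1:ℝ) else 0) h) = if i ∈ hin h0 then 1 else 0 := by
        rw [Finset.sum_ite_eq' (Finset.univ.filter (fun h => i ∈ hin h)) h0
          (fun _ => (1:ℝ))]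
        simp
      have h2 : (∑ h ∈ Finset.univ.filter (fun h => i ∈ hout h),
          (fun h => if h = h0 then (1:ℝ) else 0) h) = if i ∈ hout h0 then 1 else 0 := by
        rw [Finset.sum_ite_eq' (Finset.univ.filter (fun h => i ∈ hout h)) h0
          (fun _ => (1:ℝ))]
        simp
      rw [h1, h2]
      by_cases hi : i ∈ hin h0
      · have hno : i ∉ hout h0 := Finset.disjoint_left.mp (hdisj h0) hi
        simp [hi, hno]
      · by_cases ho : i ∈ hout h0
        · simp [hi, ho]
        · simp [hi, ho, Real.zero_rpow hp0]
    rw [Finset.sum_congr rfl fun i _ => hterm i]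
    rw [Finset.sum_ite_mem, Finset.univ_inter]
  refine ⟨key, fun h0 => ⟨_, ?_, (key h0).le⟩, fun h0 => ⟨_, ?_, (key h0).ge⟩⟩ <;>
  · intro hcon
    have := congrFun hcon h0
    simp at this
end

section
/- Let Γ = (V,H) be an oriented hypergraph with no vertex of degree zero, p ≥ 1, and S a nonempty subset of V. Then λ_1 ≤ e_p(S)/vol(S) ≤ λ_n, where λ_1 (resp. λ_n) denotes the minimum (resp. maximum) of the vertex Rayleigh quotient RQ_p over nonzero functions, e_p(S) := Σ_{h∈H} |#(S∩h_in) − #(S∩h_out)|^p, and vol(S) := Σ_{i∈S} deg(i). -/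
open Finset

variable {V H : Type*}

/-- `e_p(S) = Σ_{h∈H} |#(S∩h_in) − #(S∩h_out)|^p`. -/
noncomputable def ep [Fintype H] [DecidableEq V]
    (hin hout : H → Finset V) (p : ℝ) (S : Finset V) : ℝ :=
  ∑ h, |((S ∩ hin h).card : ℝ) - ((S ∩ hout h).card : ℝ)| ^ p

/-- `vol(S) = Σ_{i∈S} deg(i)`. -/
noncomputable def vol [Fintype H] [DecidableEq V]
    (hin hout : H → Finset V) (S : Finset V) : ℝ :=
  ∑ i ∈ S, (hdeg hin hout i : ℝ)

/-- For a nonempty `S ⊆ V` and `p ≥ 1`: `λ₁ ≤ e_p(S)/vol(S) ≤ λ_n`, where `λ₁`/`λ_n` are the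
minimum/maximum of the vertex Rayleigh quotient over nonzero functions. -/
theorem stmt_6 [Fintype V] [Fintype H] [DecidableEq V]
    (hin hout : H → Finset V)
    (hdisj : ∀ h, Disjoint (hin h) (hout h))
    (hne : ∀ h, (hin h).Nonempty ∧ (hout h).Nonempty)
    (hdegpos : ∀ i, 0 < hdeg hin hout i)
    (p : ℝ) (hp : 1 ≤ p)
    (S : Finset V) (hS : S.Nonempty) (lam1 lamn : ℝ)
    (h1 : IsLeast {x | ∃ f : V → ℝ, f ≠ 0 ∧ RQ hin hout p f = x} lam1)
    (hn : IsGreatest {x | ∃ f : V → ℝ, f ≠ 0 ∧ RQ hin hout p f = x} lamn) :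
    lam1 ≤ ep hin hout p S / vol hin hout S ∧
      ep hin hout p S / vol hin hout S ≤ lamn := by
  set f : V → ℝ := fun i => if i ∈ S then (1:ℝ) else 0 with hf
  have hp0 : p ≠ 0 := by linarith
  have hfne : f ≠ 0 := by
    obtain ⟨i, hi⟩ := hS
    intro h
    have := congrFun h i
    simp [hf, hi] at this
  have hsum : ∀ (T : Finset V), (∑ i ∈ T, f i) = ((S ∩ T).card : ℝ) := by
    intro T
    simp only [hf]
    rw [Finset.sum_ite_mem, Finset.inter_comm, Finset.sum_const]
    simp
  have hRQ : RQ hin hout p f = ep hin hout p S / vol hin hout S := by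
    unfold RQ ep vol
    congr 1
    · refine Finset.sum_congr rfl fun h _ => ?_
      rw [hsum, hsum]
    · rw [← Finset.sum_filter_add_sum_filter_not Finset.univ (· ∈ S)]
      have h2 : ∑ i ∈ Finset.univ.filter (· ∉ S), (hdeg hin hout i : ℝ) * |f i| ^ p = 0 := by
        refine Finset.sum_eq_zero fun i hi => ?_
        simp only [Finset.mem_filter] at hi
        simp [hf, hi.2, Real.zero_rpow hp0]
      rw [h2, add_zero, Finset.filter_mem_eq_inter, Finset.univ_inter]
      refine Finset.sum_congr rfl fun i hi => ?_
      simp [hf, hi]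
  exact ⟨hRQ ▸ h1.2 ⟨f, hfne, rfl⟩, hRQ ▸ hn.2 ⟨f, hfne, rfl⟩⟩
end

section
/- Let Γ = (V,H) be an oriented hypergraph with positive degrees, p ≥ 1, k ≥ 2, and (V_1,…,V_k) a partition of V into nonempty sets. Then λ_n ≥ (1/k)·Σ_{r=1}^k e_p(V_r)/vol(V_r) ≥ (1/(k·vol(V)))·Σ_{r=1}^k e_p(V_r), where λ_n is the maximum of the vertex Rayleigh quotient RQ_p. -/
open Finset

variable {V H : Type*}

lemma RQ_indicator [Fintype V] [Fintype H] [DecidableEq V]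
    (hin hout : H → Finset V) (p : ℝ) (hp : 1 ≤ p) (S : Finset V) :
    RQ hin hout p (fun i => if i ∈ S then (1:ℝ) else 0) = ep hin hout p S / vol hin hout S := by
  have hp0 : p ≠ 0 := by positivity
  unfold RQ ep vol
  have key : ∀ T : Finset V, ∑ i ∈ T, (if i ∈ S then (1:ℝ) else 0) = ((S ∩ T).card : ℝ) := by
    intro T
    rw [Finset.sum_boole, Finset.filter_mem_eq_inter, Finset.inter_comm]
  congr 1
  · apply Finset.sum_congr rfl
    intro h _
    rw [key, key]
  · rw [← Finset.sum_filter_add_sum_filter_not Finset.univ (· ∈ S)]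
    have h1 : ∀ i ∈ Finset.univ.filter (· ∈ S),
        (hdeg hin hout i : ℝ) * |if i ∈ S then (1:ℝ) else 0| ^ p = (hdeg hin hout i : ℝ) := by
      intro i hi
      simp only [Finset.mem_filter] at hi
      simp [hi.2, Real.one_rpow]
    have h2 : ∀ i ∈ Finset.univ.filter (fun i => ¬ i ∈ S),
        (hdeg hin hout i : ℝ) * |if i ∈ S then (1:ℝ) else 0| ^ p = 0 := by
      intro i hi
      simp only [Finset.mem_filter] at hi
      simp [hi.2, Real.zero_rpow hp0]
    rw [Finset.sum_congr rfl h1, Finset.sum_congr rfl h2, Finset.sum_const_zero, add_zero]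
    rw [Finset.filter_mem_eq_inter, Finset.univ_inter]

/-- For a partition `(V_1,…,V_k)` of `V` into nonempty sets (`k ≥ 2`) and `p ≥ 1`:
`λ_n ≥ (1/k)·Σ_r e_p(V_r)/vol(V_r) ≥ (1/(k·vol(V)))·Σ_r e_p(V_r)`. -/
theorem stmt_7 [Fintype V] [Fintype H] [DecidableEq V]
    (hin hout : H → Finset V)
    (hdisj : ∀ h, Disjoint (hin h) (hout h))
    (hne : ∀ h, (hin h).Nonempty ∧ (hout h).Nonempty)
    (hdegpos : ∀ i, 0 < hdeg hin hout i)
    (p : ℝ) (hp : 1 ≤ p)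
    (k : ℕ) (hk : 2 ≤ k) (P : Fin k → Finset V)
    (hPne : ∀ r, (P r).Nonempty)
    (hPdisj : ∀ r r', r ≠ r' → Disjoint (P r) (P r'))
    (hPcover : ∀ i : V, ∃ r, i ∈ P r)
    (lamn : ℝ)
    (hn : IsGreatest {x | ∃ f : V → ℝ, f ≠ 0 ∧ RQ hin hout p f = x} lamn) :
    (1 / (k : ℝ)) * ∑ r, ep hin hout p (P r) / vol hin hout (P r) ≤ lamn ∧
    (1 / ((k : ℝ) * vol hin hout Finset.univ)) * ∑ r, ep hin hout p (P r) ≤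
      (1 / (k : ℝ)) * ∑ r, ep hin hout p (P r) / vol hin hout (P r) := by
  have hk0 : (0:ℝ) < (k:ℝ) := by exact_mod_cast Nat.lt_of_lt_of_le Nat.zero_lt_two hk
  have hvolpos : ∀ r, 0 < vol hin hout (P r) := by
    intro r
    obtain ⟨i, hi⟩ := hPne r
    apply Finset.sum_pos
    · intro j _
      exact_mod_cast hdegpos j
    · exact ⟨i, hi⟩
  have hvolV : ∀ r, vol hin hout (P r) ≤ vol hin hout Finset.univ := by
    intro r
    apply Finset.sum_le_sum_of_subset_of_nonneg (Finset.subset_univ _)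
    intro j _ _
    positivity
  have hvolVpos : 0 < vol hin hout Finset.univ := lt_of_lt_of_le (hvolpos ⟨0, by omega⟩) (hvolV _)
  have hep : ∀ r, 0 ≤ ep hin hout p (P r) := by
    intro r
    apply Finset.sum_nonneg
    intro h _
    positivity
  constructor
  · have hle : ∀ r, ep hin hout p (P r) / vol hin hout (P r) ≤ lamn := by
      intro r
      apply hn.2
      refine ⟨fun i => if i ∈ P r then (1:ℝ) else 0, ?_, RQ_indicator hin hout p hp (P r)⟩
      obtain ⟨i, hi⟩ := hPne r
      intro hf
      have := congrFun hf i
      simp [hi] at this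
    calc (1 / (k : ℝ)) * ∑ r, ep hin hout p (P r) / vol hin hout (P r)
        ≤ (1 / (k : ℝ)) * ∑ _r : Fin k, lamn := by
          apply mul_le_mul_of_nonneg_left (Finset.sum_le_sum fun r _ => hle r) (by positivity)
      _ = lamn := by
          rw [Finset.sum_const, Finset.card_univ, Fintype.card_fin, nsmul_eq_mul]
          field_simp
  · have : ∀ r : Fin k, ep hin hout p (P r) / vol hin hout Finset.univ
        ≤ ep hin hout p (P r) / vol hin hout (P r) := fun r =>
      div_le_div_of_nonneg_left (hep r) (hvolpos r) (hvolV r)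
    calc (1 / ((k : ℝ) * vol hin hout Finset.univ)) * ∑ r, ep hin hout p (P r)
        = (1 / (k : ℝ)) * ∑ r, ep hin hout p (P r) / vol hin hout Finset.univ := by
          rw [Finset.mul_sum, Finset.mul_sum]
          apply Finset.sum_congr rfl
          intro r _
          field_simp
      _ ≤ (1 / (k : ℝ)) * ∑ r, ep hin hout p (P r) / vol hin hout (P r) :=
          mul_le_mul_of_nonneg_left (Finset.sum_le_sum fun r _ => this r) (by positivity)
end

section
/- Let Γ = (V,H) be an oriented hypergraph with positive degrees and let λ_1, λ_n be the smallest and largest values of the Rayleigh quotient RQ_2 (for p = 2). Let (S_1,…,S_k) be a (k,l)-cover of V, i.e., S_1 ∪ … ∪ S_k = V and each vertex lies in exactly l of the sets, with 1 ≤ l < k. Then λ_1 ≤ (k·(e(S_1)+…+e(S_k)) − l²·e(V)) / ((k−l)·l·vol(V)) ≤ λ_n, where e(S) := Σ_{h∈H} (#(S∩h_in) − #(S∩h_out))² and vol(V) = Σ_{i∈V} deg(i). -/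
open Finset

variable {V H : Type*}

/-- `e(S) = Σ_{h∈H} (#(S∩h_in) − #(S∩h_out))²`. -/
noncomputable def e2 [Fintype H] [DecidableEq V]
    (hin hout : H → Finset V) (S : Finset V) : ℝ :=
  ∑ h, (((S ∩ hin h).card : ℝ) - ((S ∩ hout h).card : ℝ)) ^ 2

/-- The Rayleigh quotient for `p = 2`. -/
noncomputable def RQ2 [Fintype V] [Fintype H] [DecidableEq V]
    (hin hout : H → Finset V) (f : V → ℝ) : ℝ :=
  (∑ h, ((∑ i ∈ hin h, f i) - ∑ j ∈ hout h, f j) ^ 2) /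
    ∑ i, (hdeg hin hout i : ℝ) * (f i) ^ 2

section Aux

variable [Fintype V] [Fintype H] [DecidableEq V]

/-- For a `(k,l)`-cover, intersections with any finset sum to `l` times its cardinality. -/
lemma sum_card_cover {k l : ℕ} (S : Fin k → Finset V)
    (hcover : ∀ i : V, (Finset.univ.filter (fun r => i ∈ S r)).card = l)
    (A : Finset V) :
    ∑ r, ((S r ∩ A).card : ℝ) = (l : ℝ) * A.card := by
  have hnat : ∑ r, (S r ∩ A).card = l * A.card := by
    calc ∑ r, (S r ∩ A).card
        = ∑ r, ∑ i ∈ A, if i ∈ S r then 1 else 0 := by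
          refine Finset.sum_congr rfl fun r _ => ?_
          rw [← Finset.card_filter, Finset.filter_mem_eq_inter, Finset.inter_comm]
      _ = ∑ i ∈ A, ∑ r, if i ∈ S r then 1 else 0 := Finset.sum_comm
      _ = ∑ i ∈ A, l := by
          refine Finset.sum_congr rfl fun i _ => ?_
          rw [← Finset.card_filter]
          exact hcover i
      _ = l * A.card := by rw [Finset.sum_const, smul_eq_mul, mul_comm]
  exact_mod_cast hnat

end Aux

/-- For a `(k,l)`-cover `(S_1,…,S_k)` of `V` (each vertex lies in exactly `l` sets, `1 ≤ l < k`):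
`λ₁ ≤ (k·Σ_r e(S_r) − l²·e(V)) / ((k−l)·l·vol(V)) ≤ λ_n` for the normalized `2`-Laplacian. -/
theorem stmt_9 [Fintype V] [Fintype H] [DecidableEq V]
    (hin hout : H → Finset V)
    (hdisj : ∀ h, Disjoint (hin h) (hout h))
    (hne : ∀ h, (hin h).Nonempty ∧ (hout h).Nonempty)
    (hdegpos : ∀ i, 0 < hdeg hin hout i)
    (k l : ℕ) (hl : 1 ≤ l) (hlk : l < k)
    (S : Fin k → Finset V)
    (hcover : ∀ i : V, (Finset.univ.filter (fun r => i ∈ S r)).card = l)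
    (lam1 lamn : ℝ)
    (h1 : IsLeast {x | ∃ f : V → ℝ, f ≠ 0 ∧ RQ2 hin hout f = x} lam1)
    (hn : IsGreatest {x | ∃ f : V → ℝ, f ≠ 0 ∧ RQ2 hin hout f = x} lamn) :
    lam1 ≤ ((k : ℝ) * (∑ r, e2 hin hout (S r)) - (l : ℝ) ^ 2 * e2 hin hout Finset.univ) /
        (((k : ℝ) - (l : ℝ)) * (l : ℝ) * (∑ i, (hdeg hin hout i : ℝ))) ∧
    ((k : ℝ) * (∑ r, e2 hin hout (S r)) - (l : ℝ) ^ 2 * e2 hin hout Finset.univ) /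
        (((k : ℝ) - (l : ℝ)) * (l : ℝ) * (∑ i, (hdeg hin hout i : ℝ))) ≤ lamn := by
  classical
  -- V is nonempty, else the Rayleigh set is empty
  rcases isEmpty_or_nonempty V with hV | hV
  · obtain ⟨f, hf, -⟩ := h1.1
    exact absurd (funext fun i => (IsEmpty.false i).elim) hf
  have hkl : (l : ℝ) < (k : ℝ) := by exact_mod_cast hlk
  have hlpos : (0:ℝ) < l := by exact_mod_cast hl
  have hkpos : (0:ℝ) < k := lt_trans hlpos hkl
  have hklne : (k : ℝ) - l ≠ 0 := sub_ne_zero.mpr (ne_of_gt hkl)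
  set D : ℝ := ∑ i, (hdeg hin hout i : ℝ) with hD
  have hDpos : 0 < D := Finset.sum_pos
    (fun i _ => by exact_mod_cast hdegpos i) ⟨Classical.arbitrary V, mem_univ _⟩
  -- the test functions
  set f : Fin k → V → ℝ := fun r i => (k:ℝ) * (if i ∈ S r then 1 else 0) - l with hfdef
  -- sums of f r over a finset
  have hsumA : ∀ (r : Fin k) (A : Finset V),
      ∑ i ∈ A, f r i = (k:ℝ) * ((S r ∩ A).card : ℝ) - (l:ℝ) * A.card := by
    intro r A
    simp only [hfdef]
    rw [Finset.sum_sub_distrib, ← Finset.mul_sum, Finset.sum_boole, Finset.sum_const,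
      Finset.filter_mem_eq_inter, Finset.inter_comm]
    push_cast
    ring
  have hcard := sum_card_cover S hcover
  -- numerators and denominators of the Rayleigh quotients
  set N : Fin k → ℝ := fun r => ∑ h, ((∑ i ∈ hin h, f r i) - ∑ j ∈ hout h, f r j) ^ 2 with hN
  set Dr : Fin k → ℝ := fun r => ∑ i, (hdeg hin hout i : ℝ) * (f r i) ^ 2 with hDr
  have hRQ : ∀ r, RQ2 hin hout (f r) = N r / Dr r := fun r => rfl
  -- each f r is nonzero, with positive denominator
  have hfval : ∀ r i, f r i ≠ 0 := by
    intro r i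
    by_cases hi : i ∈ S r <;> simp only [hfdef, hi, if_true, if_false, mul_one, mul_zero]
    · exact sub_ne_zero.mpr (ne_of_gt hkl)
    · simpa using ne_of_gt hlpos
  have hfne : ∀ r, f r ≠ 0 := by
    intro r hc
    exact hfval r (Classical.arbitrary V) (congrFun hc _)
  have hDrpos : ∀ r, 0 < Dr r := by
    intro r
    refine Finset.sum_pos (fun i _ => ?_) ⟨Classical.arbitrary V, mem_univ _⟩
    have hne0 := hfval r i
    exact mul_pos (by exact_mod_cast hdegpos i) (by positivity)
  -- total numerator
  have hNsum : ∑ r, N r = (k:ℝ) * ((k:ℝ) * (∑ r, e2 hin hout (S r))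
      - (l:ℝ)^2 * e2 hin hout Finset.univ) := by
    rw [hN]
    rw [Finset.sum_comm]
    have : ∀ h : H, ∑ r, ((∑ i ∈ hin h, f r i) - ∑ j ∈ hout h, f r j) ^ 2
        = (k:ℝ) * ((k:ℝ) * (∑ r, (((S r ∩ hin h).card : ℝ) - ((S r ∩ hout h).card : ℝ))^2)
          - (l:ℝ)^2 * (((hin h).card : ℝ) - ((hout h).card : ℝ))^2) := by
      intro h
      set a : Fin k → ℝ := fun r => ((S r ∩ hin h).card : ℝ) - ((S r ∩ hout h).card : ℝ) with ha
      set b : ℝ := ((hin h).card : ℝ) - ((hout h).card : ℝ) with hb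
      have hsa : ∑ r, a r = (l:ℝ) * b := by
        simp only [ha, hb, Finset.sum_sub_distrib, hcard (hin h), hcard (hout h)]
        ring
      have hterm : ∀ r, ((∑ i ∈ hin h, f r i) - ∑ j ∈ hout h, f r j) ^ 2
          = (k:ℝ)^2 * (a r)^2 - 2*(k:ℝ)*(l:ℝ)*b*(a r) + (l:ℝ)^2*b^2 := by
        intro r
        rw [hsumA r (hin h), hsumA r (hout h)]
        simp only [ha, hb]
        ring
      calc ∑ r, ((∑ i ∈ hin h, f r i) - ∑ j ∈ hout h, f r j) ^ 2
          = ∑ r, ((k:ℝ)^2 * (a r)^2 - 2*(k:ℝ)*(l:ℝ)*b*(a r) + (l:ℝ)^2*b^2) :=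
            Finset.sum_congr rfl fun r _ => hterm r
        _ = (k:ℝ)^2 * (∑ r, (a r)^2) - 2*(k:ℝ)*(l:ℝ)*b*(∑ r, a r) + (k:ℝ)*((l:ℝ)^2*b^2) := by
            rw [Finset.sum_add_distrib, Finset.sum_sub_distrib, ← Finset.mul_sum,
              ← Finset.mul_sum, Finset.sum_const, Finset.card_univ, Fintype.card_fin,
              nsmul_eq_mul]
        _ = (k:ℝ) * ((k:ℝ) * (∑ r, (a r)^2) - (l:ℝ)^2 * b^2) := by
            rw [hsa]; ring
    rw [Finset.sum_congr rfl fun h _ => this h, ← Finset.mul_sum,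
      Finset.sum_sub_distrib, ← Finset.mul_sum, ← Finset.mul_sum, Finset.sum_comm]
    simp only [e2, Finset.univ_inter]
  -- total denominator
  have hDsum : ∑ r, Dr r = (k:ℝ) * ((l:ℝ) * (((k:ℝ) - l) * D)) := by
    rw [hDr, Finset.sum_comm]
    have hsq : ∀ i : V, ∑ r, (f r i)^2 = (k:ℝ)*(l:ℝ)*((k:ℝ)-(l:ℝ)) := by
      intro i
      have h1 : ∀ r, (f r i)^2
          = (if i ∈ S r then (1:ℝ) else 0) * (((k:ℝ)-l)^2 - (l:ℝ)^2) + (l:ℝ)^2 := by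
        intro r
        by_cases hi : i ∈ S r <;> simp only [hfdef, hi, if_true, if_false, mul_one, mul_zero] <;> ring
      have h2 : ∑ r, (if i ∈ S r then (1:ℝ) else 0) = (l:ℝ) := by
        rw [Finset.sum_boole]
        exact_mod_cast congrArg (Nat.cast (R := ℝ)) (hcover i)
      calc ∑ r, (f r i)^2
          = ∑ r, ((if i ∈ S r then (1:ℝ) else 0) * (((k:ℝ)-l)^2 - (l:ℝ)^2) + (l:ℝ)^2) :=
            Finset.sum_congr rfl fun r _ => h1 r
        _ = (∑ r, if i ∈ S r then (1:ℝ) else 0) * (((k:ℝ)-l)^2 - (l:ℝ)^2) + (k:ℝ)*(l:ℝ)^2 := by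
            rw [Finset.sum_add_distrib, ← Finset.sum_mul, Finset.sum_const, Finset.card_univ,
              Fintype.card_fin, nsmul_eq_mul]
        _ = (k:ℝ)*(l:ℝ)*((k:ℝ)-(l:ℝ)) := by rw [h2]; ring
    calc ∑ i, ∑ r, (hdeg hin hout i : ℝ) * (f r i) ^ 2
        = ∑ i, (hdeg hin hout i : ℝ) * ((k:ℝ)*(l:ℝ)*((k:ℝ)-(l:ℝ))) := by
          refine Finset.sum_congr rfl fun i _ => ?_
          rw [← Finset.mul_sum, hsq i]
      _ = (k:ℝ) * ((l:ℝ) * (((k:ℝ) - l) * D)) := by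
          rw [← Finset.sum_mul, hD]; ring
  have hDsumpos : 0 < ∑ r, Dr r := by
    rw [hDsum]
    exact mul_pos hkpos (mul_pos hlpos (mul_pos (sub_pos.mpr hkl) hDpos))
  -- the target quotient equals (Σ N)/(Σ Dr)
  have hQ : ((k : ℝ) * (∑ r, e2 hin hout (S r)) - (l : ℝ) ^ 2 * e2 hin hout Finset.univ) /
      (((k : ℝ) - (l : ℝ)) * (l : ℝ) * D) = (∑ r, N r) / (∑ r, Dr r) := by
    rw [hNsum, hDsum]
    rw [mul_div_mul_left _ _ (ne_of_gt hkpos)]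
    ring_nf
  constructor
  · -- lower bound
    have hle : ∀ r, lam1 * Dr r ≤ N r := by
      intro r
      have := h1.2 ⟨f r, hfne r, rfl⟩
      rw [hRQ r] at this
      exact (le_div_iff₀ (hDrpos r)).mp this
    have : lam1 * (∑ r, Dr r) ≤ ∑ r, N r := by
      rw [Finset.mul_sum]
      exact Finset.sum_le_sum fun r _ => hle r
    rw [hQ]
    exact (le_div_iff₀ hDsumpos).mpr this
  · -- upper bound
    have hle : ∀ r, N r ≤ lamn * Dr r := by
      intro r
      have := hn.2 ⟨f r, hfne r, rfl⟩
      rw [hRQ r] at this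
      exact (div_le_iff₀ (hDrpos r)).mp this
    have : ∑ r, N r ≤ lamn * (∑ r, Dr r) := by
      rw [Finset.mul_sum]
      exact Finset.sum_le_sum fun r _ => hle r
    rw [hQ]
    exact (div_le_iff₀ hDsumpos).mpr this
end

section
/- Let Γ = (V,H) be an oriented hypergraph with positive degrees and (V_1,…,V_k) a partition of V. Then for p = 1: λ_n(Δ_1) ≥ (Σ_{r=1}^k e_1(V_r))/vol(V) and λ_1(Δ_1) ≤ (Σ_{r=1}^k e_1(V_r))/vol(V), where λ_1(Δ_1), λ_n(Δ_1) denote the minimum and maximum of RQ_1 over nonzero vertex functions, e_1(S) := Σ_{h∈H} |#(S∩h_in) − #(S∩h_out)|, and vol(V) := Σ_{i∈V} deg(i). -/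
open Finset

variable {V H : Type*}

/-- For `p = 1` and any partition `(V_1,…,V_k)` of `V`:
`λ_n(Δ₁) ≥ (Σ_r e₁(V_r))/vol(V)` and `λ₁(Δ₁) ≤ (Σ_r e₁(V_r))/vol(V)`. -/
theorem stmt_12 [Fintype V] [Fintype H] [DecidableEq V]
    (hin hout : H → Finset V)
    (hdisj : ∀ h, Disjoint (hin h) (hout h))
    (hne : ∀ h, (hin h).Nonempty ∧ (hout h).Nonempty)
    (hdegpos : ∀ i, 0 < hdeg hin hout i)
    (k : ℕ) (P : Fin k → Finset V)
    (hPdisj : ∀ r r', r ≠ r' → Disjoint (P r) (P r'))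
    (hPcover : ∀ i : V, ∃ r, i ∈ P r)
    (lam1 lamn : ℝ)
    (h1 : IsLeast {x | ∃ f : V → ℝ, f ≠ 0 ∧ RQ hin hout 1 f = x} lam1)
    (hn : IsGreatest {x | ∃ f : V → ℝ, f ≠ 0 ∧ RQ hin hout 1 f = x} lamn) :
    (∑ r, ep hin hout 1 (P r)) / vol hin hout Finset.univ ≤ lamn ∧
    lam1 ≤ (∑ r, ep hin hout 1 (P r)) / vol hin hout Finset.univ := by
  classical
  -- V is nonempty
  obtain ⟨f0, hf0, -⟩ := h1.1
  have hVne : (Finset.univ : Finset V).Nonempty := by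
    by_contra hc
    apply hf0
    funext i
    exact absurd ⟨i, Finset.mem_univ i⟩ hc
  have hvolpos : 0 < vol hin hout Finset.univ :=
    Finset.sum_pos (fun i _ => by exact_mod_cast hdegpos i) hVne
  have key : ∀ r, lam1 * vol hin hout (P r) ≤ ep hin hout 1 (P r) ∧
      ep hin hout 1 (P r) ≤ lamn * vol hin hout (P r) := by
    intro r
    rcases (P r).eq_empty_or_nonempty with hS | hS
    · simp [hS, ep, vol]
    · set S := P r with hSdef
      have hvS : 0 < vol hin hout S :=
        Finset.sum_pos (fun i _ => by exact_mod_cast hdegpos i) hS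
      set f : V → ℝ := fun i => if i ∈ S then 1 else 0 with hf
      have hfne : f ≠ 0 := by
        obtain ⟨i, hi⟩ := hS
        intro h
        have := congrFun h i
        simp [hf, hi] at this
      have hRQ : RQ hin hout 1 f = ep hin hout 1 S / vol hin hout S := by
        unfold RQ ep vol
        congr 1
        · refine Finset.sum_congr rfl (fun h _ => ?_)
          rw [Real.rpow_one, Real.rpow_one]
          have hsin : (∑ i ∈ hin h, f i) = ((S ∩ hin h).card : ℝ) := by
            simp only [hf]
            rw [Finset.sum_boole, Finset.filter_mem_eq_inter, Finset.inter_comm]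
          have hsout : (∑ j ∈ hout h, f j) = ((S ∩ hout h).card : ℝ) := by
            simp only [hf]
            rw [Finset.sum_boole, Finset.filter_mem_eq_inter, Finset.inter_comm]
          rw [hsin, hsout]
        · have : ∀ i : V, (hdeg hin hout i : ℝ) * |f i| ^ (1:ℝ)
              = if i ∈ S then (hdeg hin hout i : ℝ) else 0 := by
            intro i
            by_cases hi : i ∈ S <;> simp [hf, hi]
          rw [Finset.sum_congr rfl (fun i _ => this i), Finset.sum_ite_mem,
            Finset.univ_inter]
      have h1' := h1.2 ⟨f, hfne, rfl⟩
      have hn' := hn.2 ⟨f, hfne, rfl⟩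
      rw [hRQ] at h1' hn'
      exact ⟨(le_div_iff₀ hvS).mp h1', (div_le_iff₀ hvS).mp hn'⟩
  have huniv : (Finset.univ : Finset (Fin k)).biUnion P = (Finset.univ : Finset V) := by
    apply Finset.eq_univ_iff_forall.mpr
    intro i
    obtain ⟨r, hr⟩ := hPcover i
    exact Finset.mem_biUnion.mpr ⟨r, Finset.mem_univ r, hr⟩
  have hsum_vol : ∑ r, vol hin hout (P r) = vol hin hout Finset.univ := by
    unfold vol
    rw [← huniv, Finset.sum_biUnion]
    exact fun r _ r' _ hrr' => hPdisj r r' hrr'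
  constructor
  · rw [div_le_iff₀ hvolpos]
    calc ∑ r, ep hin hout 1 (P r) ≤ ∑ r, lamn * vol hin hout (P r) :=
          Finset.sum_le_sum fun r _ => (key r).2
      _ = lamn * vol hin hout Finset.univ := by rw [← Finset.mul_sum, hsum_vol]
  · rw [le_div_iff₀ hvolpos]
    calc lam1 * vol hin hout Finset.univ = ∑ r, lam1 * vol hin hout (P r) := by
          rw [← Finset.mul_sum, hsum_vol]
      _ ≤ ∑ r, ep hin hout 1 (P r) := Finset.sum_le_sum fun r _ => (key r).1
end

section
/- Let Γ = (V,H) be an oriented hypergraph with positive degrees and p ≥ 1. For every nonempty subset Ĥ ⊆ H, the hyperedge Rayleigh quotient of the indicator function of Ĥ equals η_p(Ĥ) := e_p(Ĥ)/#Ĥ, where e_p(Ĥ) := Σ_{i∈V} (1/deg(i))·|#(Ĥ∩i_in) − #(Ĥ∩i_out)|^p, i_in (resp. i_out) being the set of hyperedges containing i as an input (resp. output). Consequently μ_1 ≤ η_p(Ĥ) ≤ μ_m, where μ_1 and μ_m are the minimum and maximum of the hyperedge Rayleigh quotient over nonzero functions γ : H → ℝ. -/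
open Finset

variable {V H : Type*}

/-- `e_p(Ĥ) = Σ_{i∈V} (1/deg(i))·|#(Ĥ∩i_in) − #(Ĥ∩i_out)|^p` for a set `Ĥ` of hyperedges. -/
noncomputable def epH [Fintype V] [Fintype H] [DecidableEq V]
    (hin hout : H → Finset V) (p : ℝ) (A : Finset H) : ℝ :=
  ∑ i, (1 / (hdeg hin hout i : ℝ)) *
    |((A.filter (fun h => i ∈ hin h)).card : ℝ) -
      ((A.filter (fun h => i ∈ hout h)).card : ℝ)| ^ p

lemma sum_indicator_filter [Fintype H] [DecidableEq H] (A : Finset H) (P : H → Prop)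
    [DecidablePred P] :
    (∑ h ∈ Finset.univ.filter P, (if h ∈ A then (1:ℝ) else 0)) =
      ((A.filter P).card : ℝ) := by
  rw [Finset.sum_boole]
  congr 2
  ext h
  simp [and_comm]

/-- For every nonempty `Ĥ ⊆ H`, the hyperedge Rayleigh quotient of the indicator of `Ĥ` equals
`η_p(Ĥ) = e_p(Ĥ)/#Ĥ`; consequently `μ₁ ≤ η_p(Ĥ) ≤ μ_m`. -/
theorem stmt_13 [Fintype V] [Fintype H] [DecidableEq V] [DecidableEq H]
    (hin hout : H → Finset V)
    (hdisj : ∀ h, Disjoint (hin h) (hout h))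
    (hne : ∀ h, (hin h).Nonempty ∧ (hout h).Nonempty)
    (hdegpos : ∀ i, 0 < hdeg hin hout i)
    (p : ℝ) (hp : 1 ≤ p)
    (A : Finset H) (hA : A.Nonempty) (mu1 mum : ℝ)
    (h1 : IsLeast {x | ∃ γ : H → ℝ, γ ≠ 0 ∧ RQH hin hout p γ = x} mu1)
    (hm : IsGreatest {x | ∃ γ : H → ℝ, γ ≠ 0 ∧ RQH hin hout p γ = x} mum) :
    RQH hin hout p (fun h => if h ∈ A then 1 else 0) = epH hin hout p A / (A.card : ℝ) ∧
    mu1 ≤ epH hin hout p A / (A.card : ℝ) ∧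
    epH hin hout p A / (A.card : ℝ) ≤ mum := by
  have key : RQH hin hout p (fun h => if h ∈ A then 1 else 0)
      = epH hin hout p A / (A.card : ℝ) := by
    unfold RQH epH
    congr 1
    · refine Finset.sum_congr rfl fun i _ => ?_
      rw [sum_indicator_filter, sum_indicator_filter]
    · have he : ∀ h : H, |(if h ∈ A then (1:ℝ) else 0)| ^ p = if h ∈ A then 1 else 0 :=
        fun h => by
          by_cases hh : h ∈ A <;> simp [hh, Real.zero_rpow (by linarith : p ≠ 0)]
      simp only [he, Finset.sum_boole, Finset.filter_univ_mem]
  have hmem : epH hin hout p A / (A.card : ℝ) ∈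
      {x | ∃ γ : H → ℝ, γ ≠ 0 ∧ RQH hin hout p γ = x} := by
    refine ⟨_, ?_, key⟩
    obtain ⟨h0, hh0⟩ := hA
    intro hc
    have := congrFun hc h0
    simp [hh0] at this
  exact ⟨key, h1.2 hmem, hm.2 hmem⟩
end

section
/- Let Γ = (V,H) be an oriented hypergraph with positive degrees, p ≥ 1, k ≥ 2, and (H_1,…,H_k) a partition of H into nonempty sets. Then μ_m ≥ (1/k)·Σ_{j=1}^k η_p(H_j) ≥ (1/(k·#H))·Σ_{j=1}^k e_p(H_j), where μ_m is the maximum of the hyperedge Rayleigh quotient, η_p(Ĥ) := e_p(Ĥ)/#Ĥ and e_p(Ĥ) := Σ_{i∈V} (1/deg(i))·|#(Ĥ∩i_in) − #(Ĥ∩i_out)|^p. -/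
open Finset

variable {V H : Type*}

lemma RQH_indicator [Fintype V] [Fintype H] [DecidableEq V] [DecidableEq H]
    (hin hout : H → Finset V) (p : ℝ) (hp : 0 < p) (A : Finset H) :
    RQH hin hout p (fun h => if h ∈ A then (1:ℝ) else 0) =
      epH hin hout p A / (A.card : ℝ) := by
  have hsum : ∀ P : H → Prop, ∀ _ : DecidablePred P,
      (∑ h ∈ Finset.univ.filter P, (if h ∈ A then (1:ℝ) else 0)) =
        ((A.filter P).card : ℝ) := by
    intro P _
    rw [Finset.sum_boole, Finset.filter_filter]
    congr 1
    rw [show (A.filter P) = Finset.univ.filter (fun h => P h ∧ h ∈ A) by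
      ext h; simp [Finset.mem_filter, and_comm]]
  have hden : (∑ h, |(if h ∈ A then (1:ℝ) else 0)| ^ p) = (A.card : ℝ) := by
    rw [show (A.card : ℝ) = ∑ h ∈ A, (1:ℝ) by simp]
    rw [← Finset.sum_filter_add_sum_filter_not Finset.univ (· ∈ A)]
    have h1 : ∀ h ∈ Finset.univ.filter (· ∈ A), |(if h ∈ A then (1:ℝ) else 0)| ^ p = 1 := by
      intro h hh; simp at hh; simp [hh]
    have h2 : ∀ h ∈ Finset.univ.filter (¬ · ∈ A), |(if h ∈ A then (1:ℝ) else 0)| ^ p = 0 := by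
      intro h hh; simp at hh
      simp [hh, Real.zero_rpow hp.ne']
    rw [Finset.sum_congr rfl h1, Finset.sum_congr rfl h2]
    simp
  unfold RQH epH
  rw [hden]
  congr 1
  apply Finset.sum_congr rfl
  intro i _
  beta_reduce
  rw [hsum _ _, hsum _ _]

lemma epH_nonneg [Fintype V] [Fintype H] [DecidableEq V] [DecidableEq H]
    (hin hout : H → Finset V) (p : ℝ) (A : Finset H) :
    0 ≤ epH hin hout p A := by
  apply Finset.sum_nonneg
  intro i _
  apply mul_nonneg (by positivity)
  exact Real.rpow_nonneg (abs_nonneg _) p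

/-- For a partition `(H_1,…,H_k)` of `H` into nonempty sets (`k ≥ 2`) and `p ≥ 1`:
`μ_m ≥ (1/k)·Σ_j η_p(H_j) ≥ (1/(k·#H))·Σ_j e_p(H_j)`, where `η_p(Ĥ) = e_p(Ĥ)/#Ĥ`. -/
theorem stmt_14 [Fintype V] [Fintype H] [DecidableEq V] [DecidableEq H]
    (hin hout : H → Finset V)
    (hdisj : ∀ h, Disjoint (hin h) (hout h))
    (hne : ∀ h, (hin h).Nonempty ∧ (hout h).Nonempty)
    (hdegpos : ∀ i, 0 < hdeg hin hout i)
    (p : ℝ) (hp : 1 ≤ p)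
    (k : ℕ) (hk : 2 ≤ k) (Q : Fin k → Finset H)
    (hQne : ∀ j, (Q j).Nonempty)
    (hQdisj : ∀ j j', j ≠ j' → Disjoint (Q j) (Q j'))
    (hQcover : ∀ h : H, ∃ j, h ∈ Q j)
    (mum : ℝ)
    (hm : IsGreatest {x | ∃ γ : H → ℝ, γ ≠ 0 ∧ RQH hin hout p γ = x} mum) :
    (1 / (k : ℝ)) * ∑ j, epH hin hout p (Q j) / ((Q j).card : ℝ) ≤ mum ∧
    (1 / ((k : ℝ) * (Fintype.card H : ℝ))) * ∑ j, epH hin hout p (Q j) ≤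
      (1 / (k : ℝ)) * ∑ j, epH hin hout p (Q j) / ((Q j).card : ℝ) := by
  have hp0 : (0:ℝ) < p := lt_of_lt_of_le one_pos hp
  have hk0 : (0:ℝ) < (k:ℝ) := by positivity
  have key : ∀ j, epH hin hout p (Q j) / ((Q j).card : ℝ) ≤ mum := by
    intro j
    apply hm.2
    refine ⟨fun h => if h ∈ Q j then 1 else 0, ?_, RQH_indicator hin hout p hp0 (Q j)⟩
    obtain ⟨h, hh⟩ := hQne j
    intro hzero
    have := congrFun hzero h
    simp [hh] at this
  constructor
  · have hsum : (∑ j, epH hin hout p (Q j) / ((Q j).card : ℝ)) ≤ (k:ℝ) * mum := by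
      calc (∑ j, epH hin hout p (Q j) / ((Q j).card : ℝ)) ≤ ∑ _j : Fin k, mum :=
            Finset.sum_le_sum (fun j _ => key j)
        _ = (k:ℝ) * mum := by simp [mul_comm]
    calc (1 / (k : ℝ)) * ∑ j, epH hin hout p (Q j) / ((Q j).card : ℝ)
        ≤ (1 / (k:ℝ)) * ((k:ℝ) * mum) :=
          mul_le_mul_of_nonneg_left hsum (by positivity)
      _ = mum := by field_simp
  · have hHne : Nonempty H := by
      obtain ⟨h, _⟩ := hQne ⟨0, by omega⟩
      exact ⟨h⟩
    have hN0 : (0:ℝ) < (Fintype.card H : ℝ) := by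
      have := Fintype.card_pos (α := H)
      positivity
    have hterm : ∀ j, epH hin hout p (Q j) / (Fintype.card H : ℝ) ≤
        epH hin hout p (Q j) / ((Q j).card : ℝ) := by
      intro j
      apply div_le_div_of_nonneg_left (epH_nonneg hin hout p (Q j))
      · exact_mod_cast (hQne j).card_pos
      · exact_mod_cast Finset.card_le_univ (Q j)
    calc (1 / ((k : ℝ) * (Fintype.card H : ℝ))) * ∑ j, epH hin hout p (Q j)
        = (1 / (k:ℝ)) * ∑ j, epH hin hout p (Q j) / (Fintype.card H : ℝ) := by
          rw [← Finset.sum_div]; field_simp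
      _ ≤ (1 / (k:ℝ)) * ∑ j, epH hin hout p (Q j) / ((Q j).card : ℝ) := by
          apply mul_le_mul_of_nonneg_left _ (by positivity)
          exact Finset.sum_le_sum (fun j _ => hterm j)
end

section
/- Let A > 0 > B be real numbers with A > |B|, set B' := |B|, and let p ≥ 1. Then for all real t, s: |tA − sB'|^p ≥ (|t|^p·A − |s|^p·B')·(A − B')^{p−1}. -/
/-!
With `C = A - B'`, `|t|` is at most the convex combination `(B'/A)·|s| + (C/A)·(z/C)`
with `z = |tA - sB'|`, because `|t|A - |s|B' ≤ |tA - sB'|`. Convexity of `u ↦ u^p` on `[0, ∞)`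
then gives `|t|^p ≤ (B'/A)·|s|^p + (C/A)·(z/C)^p`, which rearranges to the claim.
-/

open Real

theorem mul_rpow_sub_mul_rpow_le {p a b x y z : ℝ} (hp : 1 ≤ p) (hb : 0 ≤ b) (hba : b < a)
    (hx : 0 ≤ x) (hy : 0 ≤ y) (hz : 0 ≤ z) (hxyz : x * a ≤ y * b + z) :
    (x ^ p * a - y ^ p * b) * (a - b) ^ (p - 1) ≤ z ^ p := by
  have ha : 0 < a := hb.trans_lt hba
  have hC : 0 < a - b := sub_pos.mpr hba
  have hcomb : x ≤ b / a * y + (a - b) / a * (z / (a - b)) := by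
    rwa [show b / a * y + (a - b) / a * (z / (a - b)) = (y * b + z) / a by field_simp,
      le_div_iff₀ ha]
  have hconv : (b / a * y + (a - b) / a * (z / (a - b))) ^ p
      ≤ b / a * y ^ p + (a - b) / a * (z / (a - b)) ^ p :=
    (convexOn_rpow hp).2 (Set.mem_Ici.mpr hy) (Set.mem_Ici.mpr (by positivity))
      (by positivity) (by positivity) (by field_simp; ring)
  have hxp : x ^ p ≤ b / a * y ^ p + (a - b) / a * (z / (a - b)) ^ p :=
    (rpow_le_rpow hx hcomb (by linarith)).trans hconv
  have hxpa : x ^ p * a - y ^ p * b ≤ (a - b) * (z / (a - b)) ^ p := by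
    have := mul_le_mul_of_nonneg_right hxp ha.le
    rw [show (b / a * y ^ p + (a - b) / a * (z / (a - b)) ^ p) * a
      = b * y ^ p + (a - b) * (z / (a - b)) ^ p by field_simp] at this
    linarith
  calc (x ^ p * a - y ^ p * b) * (a - b) ^ (p - 1)
      ≤ (a - b) * (z / (a - b)) ^ p * (a - b) ^ (p - 1) :=
        mul_le_mul_of_nonneg_right hxpa (rpow_nonneg hC.le _)
    _ = z ^ p := by
        rw [div_rpow hz hC.le, rpow_sub_one hC.ne']
        field_simp

theorem stmt_17_general (p A B : ℝ) (hp : 1 ≤ p) (hAB : |B| < A) :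
    ∀ t s : ℝ, (abs (t * A - s * |B|)) ^ p ≥ (|t| ^ p * A - |s| ^ p * |B|) * (A - |B|) ^ (p - 1) := by
  intro t s
  have hA : 0 < A := (abs_nonneg B).trans_lt hAB
  refine mul_rpow_sub_mul_rpow_le hp (abs_nonneg B) hAB (abs_nonneg t) (abs_nonneg s)
    (abs_nonneg _) ?_
  have := abs_sub_abs_le_abs_sub (t * A) (s * |B|)
  rw [abs_mul, abs_mul, abs_of_pos hA, abs_abs] at this
  linarith

/-- Key inequality of the nodal domain theorem: let `A > 0 > B` with `A > |B|`, set `B' = |B|`,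
and `p ≥ 1`. Then for all real `t, s`:
`|tA − sB'|^p ≥ (|t|^p·A − |s|^p·B')·(A − B')^{p−1}`. -/
theorem stmt_17 (p A B : ℝ) (hp : 1 ≤ p) (hA : 0 < A) (hB : B < 0) (hAB : |B| < A) :
    ∀ t s : ℝ, (abs (t * A - s * |B|)) ^ p ≥ (|t| ^ p * A - |s| ^ p * |B|) * (A - |B|) ^ (p - 1) :=
  stmt_17_general p A B hp hAB
end
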